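/- Let F1,...,Fk be finite subsets of Z^d. If F1,...,Fk admit a joint co-tile A ⊆ Z^d (F_i ⊕ A = Z^d for all i) such that A is a finite disjoint union of (d−1)-periodic sets, then F1,...,Fk admit a joint co-tile A' that is d-periodic (its stabilizer has finite index in Z^d). -/

import Mathlib

/-- `F ⊕ A = G`: every element of `G` has a unique representation `f + a`,
`f ∈ F`, `a ∈ A`. -/
def Tiles {G : Type*} [AddCommGroup G] (F : Finset G) (A : Set G) : Prop :=
  ∀ z : G, ∃! p : G × G, p.1 ∈ F ∧ p.2 ∈ A ∧ p.1 + p.2 = z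

/-- Independent tuple of elements of an abelian group. -/
def IndepT {G : Type*} [AddCommGroup G] {k : ℕ} (g : Fin k → G) : Prop :=
  ∀ n : Fin k → ℤ, (∑ i, n i • g i) = 0 → ∀ i, n i = 0

/-- The stabilizer of a subset `A` of an abelian group, as a subgroup. -/
def stabSetG {G : Type*} [AddCommGroup G] (A : Set G) : AddSubgroup G where
  carrier := { v : G | ∀ x : G, x + v ∈ A ↔ x ∈ A }
  zero_mem' := by intro x; simp
  add_mem' := by
    intro a b ha hb x
    rw [← add_assoc]
    exact (hb _).trans (ha _)
  neg_mem' := by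
    intro a ha x
    simpa using (ha (x + -a)).symm

/-!
Merge the pieces of `A` that are periodic along the same hyperplane, so that different pieces have
different hyperplanes. For every tile `F`, the cover counts `#{f ∈ F | z - f ∈ C}` of the pieces
`C` sum to one. The count of a piece `C` is periodic along its hyperplane `H`, and every other
piece is periodic in some direction transversal to `H`. These directions are all congruent, up to
multiples, to one transversal `W` modulo the periods of `C`, so differencing the count of `C` along
`W` once per other piece annihilates the other counts and leaves a constant; a bounded function
with constant iterated difference is periodic, so the count of `C` is also periodic along `W`.
By pigeonhole, `C` repeats itself under some multiple of `W` across a slab wider than the tiles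
are thick; repeating that slab periodically yields a fully periodic set with the same counts as
`C`, and the union of these sets is the required co-tile.
-/

open Finset Function
open scoped fwdDiff

section Counting

variable {G : Type*} [AddCommGroup G]

open Classical

noncomputable def coverCount (F : Finset G) (S : Set G) (z : G) : ℕ :=
  #{f ∈ F | z - f ∈ S}

theorem tiles_iff_coverCount_eq_one {F : Finset G} {S : Set G} :
    Tiles F S ↔ ∀ z, coverCount F S z = 1 := by
  refine forall_congr' fun z => ?_
  simp only [coverCount, card_eq_one, eq_singleton_iff_unique_mem, mem_filter]
  constructor
  · rintro ⟨⟨f, a⟩, ⟨hf, ha, rfl⟩, huniq⟩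
    refine ⟨f, ⟨hf, by simpa using ha⟩, fun f' ⟨hf', ha'⟩ => ?_⟩
    exact congrArg Prod.fst (huniq (f', f + a - f') ⟨hf', ha', by dsimp only; abel⟩)
  · rintro ⟨f, ⟨hf, ha⟩, huniq⟩
    refine ⟨(f, z - f), ⟨hf, ha, by dsimp only; abel⟩, ?_⟩
    rintro ⟨f', a'⟩ ⟨hf', ha', rfl⟩
    obtain rfl := huniq f' ⟨hf', by simpa using ha'⟩
    simp

lemma coverCount_le_card (F : Finset G) (S : Set G) (z : G) : coverCount F S z ≤ #F :=
  card_filter_le _ _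

lemma coverCount_mono (F : Finset G) {S S' : Set G} (h : S ⊆ S') (z : G) :
    coverCount F S z ≤ coverCount F S' z :=
  card_le_card (monotone_filter_right _ fun _ _ hf => h hf)

lemma coverCount_congr {F : Finset G} {S S' : Set G} {z : G}
    (h : ∀ f ∈ F, z - f ∈ S ↔ z - f ∈ S') : coverCount F S z = coverCount F S' z :=
  congrArg card (filter_congr h)

lemma periodic_coverCount (F : Finset G) {S : Set G} {v : G} (hv : v ∈ stabSetG S) :
    Periodic (coverCount F S) v := fun z =>
  congrArg card <| filter_congr fun f _ => by rw [show z + v - f = z - f + v by abel]; exact hv _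

section BiUnion

variable {ι : Type*}

lemma filter_sub_mem_biUnion (F : Finset G) (s : Finset ι) (C : ι → Set G) (z : G) :
    {f ∈ F | z - f ∈ ⋃ i ∈ s, C i} = s.biUnion fun i => {f ∈ F | z - f ∈ C i} := by
  ext f
  simp only [mem_filter, Set.mem_iUnion, exists_prop, mem_biUnion]
  tauto

lemma coverCount_biUnion_le (F : Finset G) (s : Finset ι) (C : ι → Set G) (z : G) :
    coverCount F (⋃ i ∈ s, C i) z ≤ ∑ i ∈ s, coverCount F (C i) z := by
  rw [coverCount, filter_sub_mem_biUnion]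
  exact card_biUnion_le

lemma coverCount_biUnion (F : Finset G) {s : Finset ι} {C : ι → Set G}
    (hC : (s : Set ι).PairwiseDisjoint C) (z : G) :
    coverCount F (⋃ i ∈ s, C i) z = ∑ i ∈ s, coverCount F (C i) z := by
  rw [coverCount, filter_sub_mem_biUnion, card_biUnion]
  · rfl
  exact fun i hi j hj hij => disjoint_filter.mpr fun _ _ h => Set.disjoint_left.mp (hC hi hj hij) h

theorem tiles_biUnion_of_sum_coverCount_eq_one {F : Finset G} {s : Finset ι} {C : ι → Set G}
    (h : ∀ z, ∑ i ∈ s, coverCount F (C i) z = 1) : Tiles F (⋃ i ∈ s, C i) := by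
  refine tiles_iff_coverCount_eq_one.mpr fun z => le_antisymm ?_ ?_
  · exact h z ▸ coverCount_biUnion_le F s C z
  · obtain ⟨i, hi, hne⟩ := exists_ne_zero_of_sum_ne_zero (h z ▸ one_ne_zero)
    exact (Nat.one_le_iff_ne_zero.mpr hne).trans
      (coverCount_mono F (Set.subset_biUnion_of_mem (u := C) hi) z)

end BiUnion

end Counting

section Periodicity

variable {G : Type*} [AddCommGroup G]

/-- For `K = ker ℓ` with `ℓ : ℤᵈ →+ ℤ` nonzero this is `(d-1)`-periodicity along the hyperplane
`ℓ = 0`, and for `K = ⊤` it is `d`-periodicity. -/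
def PeriodicAlong (K : AddSubgroup G) (C : Set G) : Prop :=
  ∀ y ∈ K, ∃ n : ℤ, n ≠ 0 ∧ n • y ∈ stabSetG C

lemma periodicAlong_empty (K : AddSubgroup G) : PeriodicAlong K ∅ :=
  fun _ _ => ⟨1, one_ne_zero, fun _ => Iff.rfl⟩

lemma PeriodicAlong.union {K : AddSubgroup G} {C₁ C₂ : Set G} (h₁ : PeriodicAlong K C₁)
    (h₂ : PeriodicAlong K C₂) : PeriodicAlong K (C₁ ∪ C₂) := by
  intro y hy
  obtain ⟨n₁, hn₁, hy₁⟩ := h₁ y hy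
  obtain ⟨n₂, hn₂, hy₂⟩ := h₂ y hy
  refine ⟨n₁ * n₂, mul_ne_zero hn₁ hn₂, fun x => ?_⟩
  have hC₁ := zsmul_mem hy₁ n₂
  have hC₂ := zsmul_mem hy₂ n₁
  rw [smul_smul, mul_comm] at hC₁
  rw [smul_smul] at hC₂
  simp only [Set.mem_union, hC₁ x, hC₂ x]

lemma PeriodicAlong.biUnion {ι : Type*} {K : AddSubgroup G} {s : Finset ι} {C : ι → Set G}
    (h : ∀ i ∈ s, PeriodicAlong K (C i)) : PeriodicAlong K (⋃ i ∈ s, C i) := by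
  classical
  induction s using Finset.induction_on with
  | empty => simpa using periodicAlong_empty K
  | insert i s _ ih =>
    rw [set_biUnion_insert]
    exact (h i (mem_insert_self i s)).union (ih fun j hj => h j (mem_insert_of_mem hj))

lemma PeriodicAlong.exists_zsmul_mem {K : AddSubgroup G} {C : Set G} (h : PeriodicAlong K C)
    (hK : K.FG) : ∃ a : ℤ, a ≠ 0 ∧ ∀ y ∈ K, a • y ∈ stabSetG C := by
  classical
  obtain ⟨S, rfl⟩ := hK
  choose! n hn0 hn using fun x (hx : x ∈ S) => h x (AddSubgroup.subset_closure hx)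
  refine ⟨∏ x ∈ S, n x, prod_ne_zero_iff.mpr hn0, fun y hy => ?_⟩
  suffices AddSubgroup.closure (S : Set G) ≤
      (stabSetG C).comap (zsmulAddGroupHom (∏ x ∈ S, n x)) from this hy
  refine (AddSubgroup.closure_le _).mpr fun x hx => ?_
  change (∏ x ∈ S, n x) • x ∈ stabSetG C
  rw [← mul_prod_erase S n hx, mul_comm, mul_smul]
  exact zsmul_mem (hn x hx) _

theorem PeriodicAlong.finiteIndex [AddGroup.FG G] {C : Set G} (h : PeriodicAlong ⊤ C) :
    (stabSetG C).FiniteIndex := by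
  rw [AddSubgroup.finiteIndex_iff_finite_quotient]
  refine AddCommGroup.finite_of_fg_isAddTorsion _ fun x => ?_
  induction x using QuotientAddGroup.induction_on with
  | H y =>
    obtain ⟨n, hn, hy⟩ := h y trivial
    exact isOfFinAddOrder_iff_zsmul_eq_zero.mpr
      ⟨n, hn, by rwa [← QuotientAddGroup.mk_zsmul, QuotientAddGroup.eq_zero_iff]⟩

end Periodicity

section Differences

variable {G M : Type*} [AddCommGroup G] [AddCommGroup M]

lemma Function.Periodic.fwdDiff {f : G → M} {c : G} (hf : Periodic f c) (h : G) :
    Periodic (Δ_[h] f) c := fun z => by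
  simp only [_root_.fwdDiff, add_right_comm z c h, hf (z + h), hf z]

/-- On `f`, differencing along `W` acts like differencing along any `V i`, which kills `ψ i`. -/
theorem exists_iterate_fwdDiff_eq_const {ι : Type*} (T : Finset ι) {f : G → M}
    {ψ : ι → G → M} {V : ι → G} {W : G} {c : M} (hf : ∀ i ∈ T, Periodic f (V i - W))
    (hψ : ∀ i ∈ T, Periodic (ψ i) (V i)) (hsum : ∀ z, f z + ∑ i ∈ T, ψ i z = c) :
    ∃ c', ∀ z, (Δ_[W])^[#T] f z = c' := by
  classical
  induction T using Finset.induction_on generalizing f ψ c with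
  | empty => exact ⟨c, by simpa using hsum⟩
  | insert j s hj ih =>
    rw [card_insert_of_notMem hj, iterate_succ_apply]
    refine ih (ψ := fun i => Δ_[V j] (ψ i)) (c := 0)
      (fun i hi => (hf i (mem_insert_of_mem hi)).fwdDiff W)
      (fun i hi => (hψ i (mem_insert_of_mem hi)).fwdDiff (V j)) fun z => ?_
    have hW : f (z + W) = f (z + V j) := by
      rw [← hf j (mem_insert_self j s) (z + W)]
      congr 1
      abel
    have h₁ := hsum (z + V j)
    have h₂ := hsum z
    rw [sum_insert hj, hψ j (mem_insert_self j s) z] at h₁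
    rw [sum_insert hj] at h₂
    simp only [_root_.fwdDiff, hW, sum_sub_distrib]
    rw [eq_sub_of_add_eq h₁, eq_sub_of_add_eq h₂]
    abel

lemma periodic_of_bounded_of_periodic_fwdDiff {f : G → ℤ} {C : ℤ} (hb : ∀ z, |f z| ≤ C)
    {W : G} (h : Periodic (Δ_[W] f) W) : Periodic f W := by
  intro z
  have hlin : ∀ n : ℕ, f (z + n • W) = f z + n * Δ_[W] f z := by
    intro n
    induction n with
    | zero => simp
    | succ n ih =>
      have hstep := h.nsmul n z
      simp only [_root_.fwdDiff] at hstep ih ⊢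
      rw [succ_nsmul, ← add_assoc]
      push_cast
      linarith
  have hzero : Δ_[W] f z = 0 := by
    by_contra hne
    have hn := hlin (2 * C.toNat + 1)
    have h₁ := abs_le.mp (hb (z + (2 * C.toNat + 1) • W))
    have h₂ := abs_le.mp (hb z)
    push_cast at hn
    rcases lt_or_gt_of_ne hne with hneg | hpos <;> nlinarith [Int.self_le_toNat C]
  simpa [_root_.fwdDiff, sub_eq_zero] using hzero

theorem periodic_of_bounded_of_iterate_fwdDiff_eq_const {f : G → ℤ} {C : ℤ}
    (hb : ∀ z, |f z| ≤ C) {W : G} {t : ℕ} {c : ℤ} (h : ∀ z, (Δ_[W])^[t] f z = c) :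
    Periodic f W := by
  induction t generalizing f C with
  | zero => exact fun z => (h (z + W)).trans (h z).symm
  | succ t ih =>
    refine periodic_of_bounded_of_periodic_fwdDiff hb (ih (C := C + C) (fun z => ?_) h)
    exact (abs_sub _ _).trans (add_le_add (hb _) (hb _))

end Differences

section Transversal

variable {G : Type*} [AddCommGroup G]

lemma AddMonoidHom.ker_eq_of_ker_le {ℓ ℓ' : G →+ ℤ} (hℓ : ℓ ≠ 0) (h : ℓ'.ker ≤ ℓ.ker) :
    ℓ'.ker = ℓ.ker := by
  refine le_antisymm h fun z hz => ?_
  obtain ⟨w, hw⟩ := DFunLike.ne_iff.mp hℓ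
  have hmem := h (x := ℓ' w • z - ℓ' z • w) (by simp [mul_comm])
  rw [AddMonoidHom.mem_ker] at hz hmem ⊢
  simp only [map_sub, map_zsmul, smul_eq_mul, hz, mul_zero, zero_sub, neg_eq_zero] at hmem
  exact (mul_eq_zero.mp hmem).resolve_right hw

theorem PeriodicAlong.exists_sub_mem {ι : Type*} {ℓ : G →+ ℤ} {C : Set G}
    (hC : PeriodicAlong ℓ.ker C) (hℓ : ℓ ≠ 0) (T : Finset ι) {w : ι → G}
    (hw : ∀ i ∈ T, ℓ (w i) ≠ 0) :
    ∃ W, ℓ W ≠ 0 ∧ ∀ i ∈ T, ∃ c : ℤ, c • w i - W ∈ stabSetG C := by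
  classical
  obtain ⟨W₀, hW₀⟩ := DFunLike.ne_iff.mp hℓ
  choose M hM0 hM using fun i => hC (ℓ W₀ • w i - ℓ (w i) • W₀) (by simp [mul_comm])
  refine ⟨(∏ i ∈ T, M i * ℓ (w i)) • W₀, ?_, fun i hi => ⟨(∏ j ∈ T.erase i, M j * ℓ (w j)) *
    M i * ℓ W₀, ?_⟩⟩
  · rw [map_zsmul, smul_eq_mul]
    exact mul_ne_zero (prod_ne_zero_iff.mpr fun i hi => mul_ne_zero (hM0 i) (hw i hi)) hW₀
  · rw [← mul_prod_erase T _ hi]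
    convert zsmul_mem (hM i) (∏ j ∈ T.erase i, M j * ℓ (w j)) using 1
    module

theorem exists_periodic_coverCount {s : Finset (AddSubgroup G)}
    (hs : ∀ K ∈ s, ∃ ℓ : G →+ ℤ, ℓ ≠ 0 ∧ ℓ.ker = K) {C : AddSubgroup G → Set G}
    (hC : ∀ K ∈ s, PeriodicAlong K (C K)) {K : AddSubgroup G} (hK : K ∈ s) :
    ∃ W ∉ K, ∀ F : Finset G, (∀ z, ∑ K' ∈ s, coverCount F (C K') z = 1) →
      Periodic (coverCount F (C K)) W := by
  classical
  obtain ⟨ℓ, hℓ, rfl⟩ := hs K hK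
  have htrans : ∀ K' ∈ s.erase ℓ.ker, ∃ w ∈ stabSetG (C K'), ℓ w ≠ 0 := by
    intro K' hK'
    obtain ⟨hne, hK's⟩ := mem_erase.mp hK'
    obtain ⟨ℓ', -, rfl⟩ := hs K' hK's
    obtain ⟨y, hy, hyK⟩ := SetLike.not_le_iff_exists.mp (mt (ℓ.ker_eq_of_ker_le hℓ) hne)
    obtain ⟨n, hn, hny⟩ := hC _ hK's y hy
    exact ⟨n • y, hny, by simpa [hn] using hyK⟩
  choose! w hwC hwℓ using htrans
  obtain ⟨W, hW, hWw⟩ := (hC _ hK).exists_sub_mem hℓ (s.erase ℓ.ker) hwℓ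
  choose! c hc using hWw
  refine ⟨W, by simpa using hW, fun F hF => ?_⟩
  have hbound : ∀ z, |(coverCount F (C ℓ.ker) z : ℤ)| ≤ #F := fun z => by
    rw [Nat.abs_cast]
    exact_mod_cast coverCount_le_card F _ z
  obtain ⟨c', hc'⟩ := exists_iterate_fwdDiff_eq_const (s.erase ℓ.ker)
    (f := fun z => (coverCount F (C ℓ.ker) z : ℤ)) (ψ := fun K' z => (coverCount F (C K') z : ℤ))
    (c := 1) (fun K' hK' => (periodic_coverCount F (hc K' hK')).comp _)
    (fun K' hK' => ((periodic_coverCount F (hwC K' hK')).zsmul (c K')).comp _)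
    (fun z => by exact_mod_cast (add_sum_erase s _ hK).trans (hF z))
  exact fun z => by exact_mod_cast periodic_of_bounded_of_iterate_fwdDiff_eq_const hbound hc' z

end Transversal

section Periodization

variable {G : Type*} [AddCommGroup G]

theorem exists_lt_forall_mem_iff {α β : Type*} {s : Set α} (κ : α → β) (hs : (κ '' s).Finite)
    (P : ℕ → α → Prop) (hP : ∀ n, ∀ x ∈ s, ∀ y ∈ s, κ x = κ y → P n x → P n y) :
    ∃ n₁ n₂, n₁ < n₂ ∧ ∀ x ∈ s, P n₁ x ↔ P n₂ x := by
  obtain ⟨n₁, n₂, hlt, heq⟩ := Set.Finite.exists_lt_map_eq_of_forall_mem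
    (f := fun n => κ '' {x ∈ s | P n x}) (fun n => Set.image_mono (Set.sep_subset _ _))
    hs.powerset
  refine ⟨n₁, n₂, hlt, fun x hx => ?_⟩
  have key : ∀ n, P n x ↔ κ x ∈ κ '' {x ∈ s | P n x} := fun n =>
    ⟨fun h => ⟨x, ⟨hx, h⟩, rfl⟩, fun ⟨y, ⟨hy, hPy⟩, hκ⟩ => hP n y hy x hx hκ hPy⟩
  rw [key, key, heq]

/-- Repeat the slab `h ≤ ℓ z < h + ℓ V` of `C` periodically along `V`. -/
def periodize (ℓ : G →+ ℤ) (V : G) (h : ℤ) (C : Set G) : Set G :=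
  {z | z - ((ℓ z - h) / ℓ V) • V ∈ C}

variable {ℓ : G →+ ℤ} {V : G} {h : ℤ} {C : Set G}

lemma self_mem_stabSetG_periodize (hV : ℓ V ≠ 0) : V ∈ stabSetG (periodize ℓ V h C) := by
  intro x
  simp only [periodize, Set.mem_ofPred_eq, map_add]
  rw [show ℓ x + ℓ V - h = ℓ x - h + 1 * ℓ V by ring, Int.add_mul_ediv_right _ _ hV]
  rw [show x + V - ((ℓ x - h) / ℓ V + 1) • V = x - ((ℓ x - h) / ℓ V) • V by module]

lemma mem_stabSetG_periodize {y : G} (hy : y ∈ stabSetG C) (hℓy : ℓ y = 0) :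
    y ∈ stabSetG (periodize ℓ V h C) := by
  intro x
  simp only [periodize, Set.mem_ofPred_eq, map_add, hℓy, add_zero]
  rw [show x + y - ((ℓ x - h) / ℓ V) • V = x - ((ℓ x - h) / ℓ V) • V + y by abel]
  exact hy _

theorem periodicAlong_top_periodize (hC : PeriodicAlong ℓ.ker C) (hV : ℓ V ≠ 0) :
    PeriodicAlong ⊤ (periodize ℓ V h C) := by
  intro z _
  obtain ⟨n, hn, hnC⟩ := hC (ℓ V • z - ℓ z • V) (by simp [mul_comm])
  refine ⟨n * ℓ V, mul_ne_zero hn hV, ?_⟩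
  rw [show (n * ℓ V) • z = n • (ℓ V • z - ℓ z • V) + (n * ℓ z) • V by module]
  refine add_mem (mem_stabSetG_periodize hnC ?_) (zsmul_mem (self_mem_stabSetG_periodize hV) _)
  simp [mul_comm]

lemma mem_periodize_iff {R : ℤ} (hR : R ≤ ℓ V)
    (hband : ∀ z, h ≤ ℓ z → ℓ z < h + R → (z + V ∈ C ↔ z ∈ C)) {z : G} (h₁ : h ≤ ℓ z)
    (h₂ : ℓ z < h + ℓ V + R) : z ∈ periodize ℓ V h C ↔ z ∈ C := by
  have hV : 0 < ℓ V := by omega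
  simp only [periodize, Set.mem_ofPred_eq]
  rcases lt_or_ge (ℓ z) (h + ℓ V) with h₃ | h₃
  · rw [Int.ediv_eq_zero_of_lt (by omega) (by omega), zero_smul, sub_zero]
  · have hq : (ℓ z - h) / ℓ V = 1 := by
      rw [show ℓ z - h = ℓ z - h - ℓ V + 1 * ℓ V by ring, Int.add_mul_ediv_right _ _ hV.ne',
        Int.ediv_eq_zero_of_lt (by omega) (by omega), zero_add]
    have hz := hband (z - V) (by rw [map_sub]; omega) (by rw [map_sub]; omega)
    rw [sub_add_cancel] at hz
    rw [hq, one_smul, hz]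

theorem coverCount_eq_of_eqOn_slab {C' : Set G} {F : Finset G} {ρ : ℤ} (hV : 0 < ℓ V)
    (hC' : V ∈ stabSetG C') (hper : Periodic (coverCount F C) V) (hρ : ∀ f ∈ F, |ℓ f| ≤ ρ)
    (hagree : ∀ z, h ≤ ℓ z → ℓ z < h + ℓ V + 2 * ρ → (z ∈ C' ↔ z ∈ C)) :
    coverCount F C' = coverCount F C := by
  funext z
  set t := (ℓ z - h - ρ) / ℓ V
  have hdiv := Int.emod_add_mul_ediv (ℓ z - h - ρ) (ℓ V)
  have hmod₁ := Int.emod_nonneg (ℓ z - h - ρ) hV.ne'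
  have hmod₂ := Int.emod_lt_of_pos (ℓ z - h - ρ) hV
  calc coverCount F C' z = coverCount F C' (z - t • V) :=
        (((periodic_coverCount F hC').zsmul t).sub_eq z).symm
    _ = coverCount F C (z - t • V) := coverCount_congr fun f hf => by
        have := abs_le.mp (hρ f hf)
        refine hagree _ ?_ ?_ <;> simp only [map_sub, map_zsmul, smul_eq_mul] <;> linarith
    _ = coverCount F C z := (hper.zsmul t).sub_eq z

end Periodization

section IntLattice

variable {d : ℕ}

lemma AddSubgroup.fg_of_isNoetherian {G : Type*} [AddCommGroup G] [IsNoetherian ℤ G]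
    (K : AddSubgroup G) : K.FG := by
  rw [← K.toIntSubmodule_toAddSubgroup, ← Submodule.fg_iff_addSubgroup_fg]
  exact IsNoetherian.noetherian _

lemma sub_mem_of_map_eq_of_emod_eq {ℓ : (Fin d → ℤ) →+ ℤ} {N : AddSubgroup (Fin d → ℤ)} {a : ℤ}
    (ha : a ≠ 0) (hN : ∀ y ∈ ℓ.ker, a • y ∈ N) {x y : Fin d → ℤ} (hℓ : ℓ x = ℓ y)
    (hmod : ∀ j, x j % a = y j % a) : x - y ∈ N := by
  choose q hq using fun j => Int.ModEq.dvd (hmod j).symm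
  have hxy : x - y = a • q := funext fun j => by simp [hq j]
  have hq0 : a * ℓ q = 0 := by
    rw [← smul_eq_mul, ← map_zsmul, ← hxy, map_sub, hℓ, sub_self]
  rw [hxy]
  exact hN q ((mul_eq_zero.mp hq0).resolve_left ha)

/-- Pigeonhole on the finitely many patterns of `C` in a slab modulo its periods along `ker ℓ`. -/
theorem PeriodicAlong.exists_slab_periodic {ℓ : (Fin d → ℤ) →+ ℤ} {C : Set (Fin d → ℤ)}
    (hC : PeriodicAlong ℓ.ker C) {W : Fin d → ℤ} (hW : ℓ W ≠ 0) (R : ℤ) :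
    ∃ n h : ℤ, R < ℓ (n • W) ∧ ∀ z, h ≤ ℓ z → ℓ z < h + R → (z + n • W ∈ C ↔ z ∈ C) := by
  obtain ⟨a, ha, haC⟩ := hC.exists_zsmul_mem (AddSubgroup.fg_of_isNoetherian _)
  set V₀ := ((|R| + 1) * ℓ W) • W with hV₀
  have hℓV₀ : |R| < ℓ V₀ := by
    have : 1 ≤ ℓ W * ℓ W := mul_self_pos.mpr hW
    simp only [hV₀, map_zsmul, smul_eq_mul]
    nlinarith [abs_nonneg R]
  have hslab : ((fun z => (ℓ z, fun j => z j % a)) '' {z | 0 ≤ ℓ z ∧ ℓ z < R}).Finite := by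
    refine ((Set.finite_Ico 0 R).prod
      (Set.Finite.pi fun _ => Set.finite_Ico 0 (a.natAbs : ℤ))).subset ?_
    rintro _ ⟨z, hz, rfl⟩
    exact ⟨hz, fun j _ => ⟨Int.emod_nonneg _ ha, Int.emod_lt _ ha⟩⟩
  obtain ⟨n₁, n₂, hlt, hn⟩ := exists_lt_forall_mem_iff _ hslab (fun n z => z + (n : ℤ) • V₀ ∈ C)
    fun n x _ y _ hxy hx => by
      have hxy := sub_mem_of_map_eq_of_emod_eq ha haC (Prod.ext_iff.mp hxy).1
        (congrFun (Prod.ext_iff.mp hxy).2)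
      exact (hxy _).mp (by rwa [show y + (n : ℤ) • V₀ + (x - y) = x + (n : ℤ) • V₀ by abel])
  refine ⟨(n₂ - n₁) * ((|R| + 1) * ℓ W), n₁ * ℓ V₀, ?_, fun z h₁ h₂ => ?_⟩
  · rw [mul_smul, ← hV₀, map_zsmul, smul_eq_mul]
    have : (1 : ℤ) ≤ n₂ - n₁ := by omega
    nlinarith [le_abs_self R, abs_nonneg R]
  · have hz := hn (z - (n₁ : ℤ) • V₀)
      (by simp only [Set.mem_ofPred_eq, map_sub, map_zsmul, smul_eq_mul]; constructor <;> linarith)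
    rw [sub_add_cancel] at hz
    rw [mul_smul, ← hV₀, hz, show z - (n₁ : ℤ) • V₀ + (n₂ : ℤ) • V₀ = z + ((n₂ : ℤ) - n₁) • V₀ by
      module]

theorem PeriodicAlong.exists_periodicAlong_top_coverCount_eq {ι : Type*} [Fintype ι]
    (F : ι → Finset (Fin d → ℤ)) {ℓ : (Fin d → ℤ) →+ ℤ} {C : Set (Fin d → ℤ)}
    (hC : PeriodicAlong ℓ.ker C) {W : Fin d → ℤ} (hW : ℓ W ≠ 0)
    (hper : ∀ i, Periodic (coverCount (F i) C) W) :
    ∃ C', PeriodicAlong ⊤ C' ∧ ∀ i, coverCount (F i) C' = coverCount (F i) C := by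
  set ρ := ∑ i, ∑ f ∈ F i, |ℓ f|
  have hρ0 : 0 ≤ ρ := sum_nonneg fun i _ => sum_nonneg fun f _ => abs_nonneg (ℓ f)
  have hρ : ∀ i, ∀ f ∈ F i, |ℓ f| ≤ ρ := fun i f hf =>
    (single_le_sum (fun f _ => abs_nonneg (ℓ f)) hf).trans
      (single_le_sum (f := fun i => ∑ f ∈ F i, |ℓ f|)
        (fun i _ => sum_nonneg fun f _ => abs_nonneg (ℓ f)) (mem_univ i))
  obtain ⟨n, h, hlt, hband⟩ := hC.exists_slab_periodic hW (2 * ρ)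
  have hV : 0 < ℓ (n • W) := by omega
  exact ⟨periodize ℓ (n • W) h C, periodicAlong_top_periodize hC hV.ne', fun i =>
    coverCount_eq_of_eqOn_slab hV (self_mem_stabSetG_periodize hV.ne') ((hper i).zsmul n) (hρ i)
      fun z h₁ h₂ => mem_periodize_iff hlt.le hband h₁ h₂⟩

end IntLattice

section NormalFunctional

variable {m : ℕ}

/-- Over `ℚ`, the `m` vectors `g` would otherwise span a space of dimension `m + 1`. -/
lemma not_forall_exists_zsmul_mem_closure (g : Fin m → Fin (m + 1) → ℤ) :
    ¬ ∀ z, ∃ c : ℤ, c ≠ 0 ∧ c • z ∈ AddSubgroup.closure (Set.range g) := by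
  intro h
  let ι : (Fin (m + 1) → ℤ) →+ (Fin (m + 1) → ℚ) := AddMonoidHom.compLeft (Int.castAddHom ℚ) _
  set S := Submodule.span ℚ (Set.range (ι ∘ g))
  have hclosure : AddSubgroup.closure (Set.range g) ≤ S.toAddSubgroup.comap ι := by
    rw [AddSubgroup.closure_le]
    rintro _ ⟨l, rfl⟩
    exact Submodule.subset_span ⟨l, rfl⟩
  have hS : S = ⊤ := by
    refine Submodule.eq_top_iff'.mpr fun q => ?_
    rw [pi_eq_sum_univ q]
    refine Submodule.sum_mem _ fun j _ => Submodule.smul_mem _ _ ?_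
    obtain ⟨c, hc, hcj⟩ := h (Pi.single j 1)
    have hmem := hclosure hcj
    rw [AddSubgroup.mem_comap, map_zsmul, ← Int.cast_smul_eq_zsmul ℚ,
      Submodule.mem_toAddSubgroup, Submodule.smul_mem_iff _ (Int.cast_ne_zero.mpr hc)] at hmem
    convert hmem using 1
    funext i
    simp [ι, Pi.single_apply, eq_comm]
  have hcard : Module.finrank ℚ S ≤ m :=
    (finrank_range_le_card (R := ℚ) (ι ∘ g)).trans_eq (Fintype.card_fin m)
  rw [hS, finrank_top, Module.finrank_fin_fun] at hcard
  omega

lemma exists_zsmul_mem_closure_of_det_eq_zero {g : Fin m → Fin (m + 1) → ℤ}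
    (hg : LinearIndependent ℤ g) {z : Fin (m + 1) → ℤ} (hz : (Matrix.of (Fin.snoc g z)).det = 0) :
    ∃ c : ℤ, c ≠ 0 ∧ c • z ∈ AddSubgroup.closure (Set.range g) := by
  obtain ⟨v, hv, hvz⟩ := Matrix.exists_vecMul_eq_zero_iff.mpr hz
  have hrow : ∀ i, Matrix.of (Fin.snoc g z) i =
      (Fin.snoc g z : Fin (m + 1) → Fin (m + 1) → ℤ) i := fun _ => rfl
  rw [Matrix.vecMul_eq_sum, Fin.sum_univ_castSucc] at hvz
  simp only [hrow, Fin.snoc_castSucc, Fin.snoc_last] at hvz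
  have hlast : v (Fin.last m) ≠ 0 := by
    intro h0
    rw [h0, zero_smul, add_zero] at hvz
    exact hv (funext (Fin.lastCases (motive := fun i => v i = 0) h0
      (Fintype.linearIndependent_iff.mp hg _ hvz)))
  refine ⟨v (Fin.last m), hlast, ?_⟩
  rw [eq_neg_of_add_eq_zero_right hvz]
  exact neg_mem (sum_mem fun i _ => zsmul_mem (AddSubgroup.subset_closure (Set.mem_range_self i)) _)

/-- The functional is `z ↦ det (g, z)`. -/
theorem exists_ne_zero_forall_mem_ker_exists_zsmul_mem_closure {g : Fin m → Fin (m + 1) → ℤ}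
    (hg : LinearIndependent ℤ g) : ∃ ℓ : (Fin (m + 1) → ℤ) →+ ℤ, ℓ ≠ 0 ∧
      ∀ z ∈ ℓ.ker, ∃ c : ℤ, c ≠ 0 ∧ c • z ∈ AddSubgroup.closure (Set.range g) := by
  classical
  let ℓ : (Fin (m + 1) → ℤ) →+ ℤ := (Matrix.detRowAlternating.toMultilinearMap.toLinearMap
    (Fin.snoc g 0 : Fin (m + 1) → Fin (m + 1) → ℤ) (Fin.last m)).toAddMonoidHom
  have hℓ : ∀ z, ℓ z = (Matrix.of (Fin.snoc g z)).det := fun z => by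
    simp only [ℓ, LinearMap.toAddMonoidHom_coe, MultilinearMap.toLinearMap_apply,
      Fin.update_snoc_last, AlternatingMap.coe_multilinearMap]
    rfl
  refine ⟨ℓ, fun h0 => not_forall_exists_zsmul_mem_closure g fun z =>
    exists_zsmul_mem_closure_of_det_eq_zero hg ?_, fun z hz =>
    exists_zsmul_mem_closure_of_det_eq_zero hg ?_⟩
  · rw [← hℓ, h0]
    rfl
  · rwa [← hℓ]

theorem exists_periodicAlong_ker_of_indepT {B : Set (Fin (m + 1) → ℤ)}
    {g : Fin m → Fin (m + 1) → ℤ} (hg : IndepT g) (hgB : ∀ l, g l ∈ stabSetG B) :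
    ∃ ℓ : (Fin (m + 1) → ℤ) →+ ℤ, ℓ ≠ 0 ∧ PeriodicAlong ℓ.ker B := by
  obtain ⟨ℓ, hℓ, hker⟩ :=
    exists_ne_zero_forall_mem_ker_exists_zsmul_mem_closure (Fintype.linearIndependent_iff.mpr hg)
  refine ⟨ℓ, hℓ, fun z hz => ?_⟩
  obtain ⟨c, hc, hcz⟩ := hker z hz
  exact ⟨c, hc, (AddSubgroup.closure_le _).mpr (Set.range_subset_iff.mpr hgB) hcz⟩

end NormalFunctional

theorem exists_pairwiseDisjoint_periodicAlong_ker {G ι : Type*} [AddCommGroup G] [Fintype ι]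
    {B : ι → Set G} (hdisj : Pairwise (Disjoint on B)) {ℓ : ι → G →+ ℤ} (hℓ : ∀ i, ℓ i ≠ 0)
    (hB : ∀ i, PeriodicAlong (ℓ i).ker (B i)) :
    ∃ (s : Finset (AddSubgroup G)) (C : AddSubgroup G → Set G),
      (∀ K ∈ s, ∃ ℓ' : G →+ ℤ, ℓ' ≠ 0 ∧ ℓ'.ker = K) ∧ (∀ K ∈ s, PeriodicAlong K (C K)) ∧
      (s : Set (AddSubgroup G)).PairwiseDisjoint C ∧ ⋃ K ∈ s, C K = ⋃ i, B i := by
  classical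
  refine ⟨univ.image fun i => (ℓ i).ker, fun K => ⋃ i ∈ univ.filter fun i => (ℓ i).ker = K, B i,
    ?_, fun K _ => PeriodicAlong.biUnion fun i hi => ?_, ?_, ?_⟩
  · simp only [mem_image, mem_univ, true_and, forall_exists_index, forall_apply_eq_imp_iff]
    exact fun i => ⟨ℓ i, hℓ i, rfl⟩
  · rw [← (mem_filter.mp hi).2]
    exact hB i
  · intro K _ K' _ hKK'
    simp only [Set.disjoint_iUnion_left, Set.disjoint_iUnion_right, mem_filter, mem_univ,
      true_and]
    rintro i rfl j rfl
    exact hdisj fun hij => hKK' (hij ▸ rfl)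
  · ext z
    simp only [Set.mem_iUnion, mem_image, mem_univ, true_and, mem_filter, exists_prop]
    exact ⟨fun ⟨_, ⟨i, rfl⟩, j, _, hj⟩ => ⟨j, hj⟩, fun ⟨i, hi⟩ => ⟨_, ⟨i, rfl⟩, i, rfl, hi⟩⟩

theorem exists_periodicAlong_top_tiles {d : ℕ} {ι κ : Type*} [Fintype ι] [Fintype κ]
    (F : κ → Finset (Fin d → ℤ)) {B : ι → Set (Fin d → ℤ)} (hdisj : Pairwise (Disjoint on B))
    {ℓ : ι → (Fin d → ℤ) →+ ℤ} (hℓ : ∀ i, ℓ i ≠ 0) (hB : ∀ i, PeriodicAlong (ℓ i).ker (B i))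
    (htile : ∀ m, Tiles (F m) (⋃ i, B i)) :
    ∃ A', PeriodicAlong ⊤ A' ∧ ∀ m, Tiles (F m) A' := by
  obtain ⟨s, C, hs, hC, hCdisj, hCunion⟩ := exists_pairwiseDisjoint_periodicAlong_ker hdisj hℓ hB
  have hsum : ∀ m z, ∑ K ∈ s, coverCount (F m) (C K) z = 1 := fun m z => by
    rw [← coverCount_biUnion _ hCdisj, hCunion]
    exact tiles_iff_coverCount_eq_one.mp (htile m) z
  have hnew : ∀ K ∈ s, ∃ C', PeriodicAlong ⊤ C' ∧
      ∀ m, coverCount (F m) C' = coverCount (F m) (C K) := by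
    intro K hK
    obtain ⟨W, hWK, hW⟩ := exists_periodic_coverCount hs hC hK
    obtain ⟨ℓ', -, rfl⟩ := hs K hK
    exact (hC _ hK).exists_periodicAlong_top_coverCount_eq F hWK fun m => hW _ (hsum m)
  choose! C' hC'per hC'cnt using hnew
  refine ⟨⋃ K ∈ s, C' K, PeriodicAlong.biUnion hC'per, fun m =>
    tiles_biUnion_of_sum_coverCount_eq_one fun z => ?_⟩
  rw [← hsum m z]
  exact sum_congr rfl fun K hK => congrFun (hC'cnt K hK m) z

theorem stmt_13 (d k : ℕ) (F : Fin k → Finset (Fin d → ℤ))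
    (A : Set (Fin d → ℤ)) (htile : ∀ i, Tiles (F i) A)
    (r : ℕ) (B : Fin r → Set (Fin d → ℤ))
    (hdisj : ∀ i j : Fin r, i ≠ j → Disjoint (B i) (B j))
    (hunion : (⋃ i, B i) = A)
    (hper : ∀ i, ∃ g : Fin (d - 1) → (Fin d → ℤ),
      IndepT g ∧ ∀ l, g l ∈ stabSetG (B i)) :
    ∃ A' : Set (Fin d → ℤ), (∀ i, Tiles (F i) A') ∧ (stabSetG A').FiniteIndex := by
  obtain _ | d := d
  · exact ⟨A, htile, AddSubgroup.finiteIndex_of_finite⟩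
  have hB : ∀ i, ∃ ℓ : (Fin (d + 1) → ℤ) →+ ℤ, ℓ ≠ 0 ∧ PeriodicAlong ℓ.ker (B i) := fun i => by
    obtain ⟨g, hg, hgB⟩ := hper i
    exact exists_periodicAlong_ker_of_indepT hg hgB
  choose ℓ hℓ hB using hB
  subst hunion
  obtain ⟨A', hA', htile'⟩ := exists_periodicAlong_top_tiles F hdisj hℓ hB htile
  exact ⟨A', htile', hA'.finiteIndex⟩
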